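/- For n ≥ 2 and 1 ≤ r < n, the short exact sequence 0 → Λ^r(Aug(ℂ^n)) → Λ^r(ℂ^n) → Λ^{r−1}(Aug(ℂ^n)) → 0 of ℂ[T_n]-modules does not split; equivalently, Λ^r(Aug(ℂ^n)) is not a direct summand of Λ^r(ℂ^n) as a ℂ[T_n]-module. -/

import Mathlib

open Finset in
/-- The natural representation of the full transformation monoid `Function.End (Fin n)`
on `ℂ^n`, determined by `f · v_i = v_{f i}` on the standard basis. -/
noncomputable def natRep (n : ℕ) :
    Representation ℂ (Function.End (Fin n)) (Fin n → ℂ) where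
  toFun f :=
    { toFun := fun x j => ∑ i, if f i = j then x i else 0
      map_add' := by
        intro x y
        funext j
        simp only [Pi.add_apply]
        rw [← Finset.sum_add_distrib]
        congr 1; funext i; split <;> simp
      map_smul' := by
        intro c x
        funext j
        simp [Finset.mul_sum, apply_ite (fun t => c * t)] }
  map_one' := by
    refine LinearMap.ext fun x => funext fun j => ?_
    show (∑ i, if (1 : Function.End (Fin n)) i = j then x i else 0) = x j
    have h : ∀ i : Fin n, (1 : Function.End (Fin n)) i = i := fun _ => rfl
    simp only [h]
    rw [Finset.sum_ite_eq' Finset.univ j x]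
    simp
  map_mul' := by
    intro f g
    refine LinearMap.ext fun x => funext fun j => ?_
    show (∑ i, if f (g i) = j then x i else 0)
        = ∑ k, if f k = j then ∑ i, if g i = k then x i else 0 else 0
    have key : ∀ k, (if f k = j then ∑ i, if g i = k then x i else 0 else 0)
        = ∑ i, if g i = k then (if f k = j then x i else 0) else 0 := by
      intro k; split
      · rfl
      · simp
    rw [Finset.sum_congr rfl (fun k _ => key k), Finset.sum_comm]
    refine Finset.sum_congr rfl fun i _ => ?_
    rw [Finset.sum_ite_eq Finset.univ (g i) (fun k => if f k = j then x i else 0)]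
    simp

lemma sum_natRep (n : ℕ) (f : Function.End (Fin n)) (x : Fin n → ℂ) :
    ∑ j, natRep n f x j = ∑ i, x i := by
  show ∑ j, ∑ i, (if f i = j then x i else 0) = _
  rw [Finset.sum_comm]
  simp [Finset.sum_ite_eq' Finset.univ]

/-- The augmentation submodule `Aug(ℂ^n)` of the natural module: vectors whose
coordinates sum to zero. -/
noncomputable def Aug (n : ℕ) : Submodule ℂ (Fin n → ℂ) where
  carrier := {x | ∑ i, x i = 0}
  add_mem' := by intro a b ha hb; simp_all [Finset.sum_add_distrib]
  zero_mem' := by simp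
  smul_mem' := by intro c a ha; simp_all [← Finset.mul_sum]

lemma natRep_mem_aug (n : ℕ) (f : Function.End (Fin n)) {x : Fin n → ℂ}
    (hx : x ∈ Aug n) : natRep n f x ∈ Aug n := by
  have : ∑ j, natRep n f x j = 0 := by rw [sum_natRep]; exact hx
  exact this

/-- The representation of the full transformation monoid on the augmentation submodule. -/
noncomputable def augRep (n : ℕ) : Representation ℂ (Function.End (Fin n)) (Aug n) where
  toFun f := (natRep n f).restrict (p := Aug n) (q := Aug n) (fun _ hx => natRep_mem_aug n f hx)
  map_one' := by
    refine LinearMap.ext fun x => Subtype.ext ?_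
    simp [LinearMap.restrict_apply]
  map_mul' := by
    intro f g
    refine LinearMap.ext fun x => Subtype.ext ?_
    simp [LinearMap.restrict_apply]

lemma extAlg_map_mem {R M N : Type} [CommRing R] [AddCommGroup M] [Module R M]
    [AddCommGroup N] [Module R N] (r : ℕ) (f : M →ₗ[R] N) {x : ExteriorAlgebra R M}
    (hx : x ∈ ⋀[R]^r M) : ExteriorAlgebra.map f x ∈ ⋀[R]^r N := by
  rw [← ExteriorAlgebra.ιMulti_span_fixedDegree] at hx ⊢
  induction hx using Submodule.span_induction with
  | mem y hy =>
      obtain ⟨v, rfl⟩ := hy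
      rw [ExteriorAlgebra.map_apply_ιMulti]
      exact Submodule.subset_span ⟨f ∘ v, rfl⟩
  | zero => simp
  | add y z _ _ hy hz => rw [map_add]; exact Submodule.add_mem _ hy hz
  | smul c y _ hy => rw [map_smul]; exact Submodule.smul_mem _ c hy

/-- The linear map between `r`-th exterior powers induced by a linear map. -/
noncomputable def extMap {R M N : Type} [CommRing R] [AddCommGroup M] [Module R M]
    [AddCommGroup N] [Module R N] (r : ℕ) (f : M →ₗ[R] N) :
    ⋀[R]^r M →ₗ[R] ⋀[R]^r N :=
  (ExteriorAlgebra.map f).toLinearMap.restrict (p := ⋀[R]^r M) (q := ⋀[R]^r N)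
    (fun _ hx => extAlg_map_mem r f hx)

/-- The representation of the full transformation monoid on the `r`-th exterior power
of the natural module, by the diagonal action on wedge products. -/
noncomputable def extRep (n r : ℕ) :
    Representation ℂ (Function.End (Fin n)) (⋀[ℂ]^r (Fin n → ℂ)) where
  toFun f := extMap r (natRep n f)
  map_one' := by
    refine LinearMap.ext fun x => Subtype.ext ?_
    simp [extMap, LinearMap.restrict_apply, map_one, Module.End.one_eq_id,
      ExteriorAlgebra.map_id]
  map_mul' := by
    intro f g
    refine LinearMap.ext fun x => Subtype.ext ?_
    simp only [extMap, LinearMap.restrict_apply, map_mul, Module.End.mul_eq_comp,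
      ← ExteriorAlgebra.map_comp_map]
    rfl

set_option synthInstance.maxHeartbeats 1000000 in
/-- The representation of the full transformation monoid on the `r`-th exterior power
of the augmentation submodule. -/
noncomputable def extAugRep (n r : ℕ) :
    Representation ℂ (Function.End (Fin n)) (⋀[ℂ]^r ↥(Aug n)) where
  toFun f := extMap r (augRep n f)
  map_one' := by
    refine LinearMap.ext fun x => Subtype.ext ?_
    simp [extMap, LinearMap.restrict_apply, map_one, Module.End.one_eq_id,
      ExteriorAlgebra.map_id]
  map_mul' := by
    intro f g
    refine LinearMap.ext fun x => Subtype.ext ?_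
    simp only [extMap, LinearMap.restrict_apply, map_mul, Module.End.mul_eq_comp,
      ← ExteriorAlgebra.map_comp_map]
    rfl

/-- The idempotent `e_m ∈ T_n` fixing the first `m` points and sending all other
points to the first point. -/
def eIdem (n m : ℕ) : Function.End (Fin n) :=
  fun i => if h : (i : ℕ) < m then i else ⟨0, i.pos⟩

/-- The embedding of the symmetric group `S_r` into `T_n` as the maximal subgroup
at the idempotent `eIdem n r` (elements `g` with `e g e = g` invertible in `e T_n e`). -/
def permEmbed (n r : ℕ) (hr : 1 ≤ r) (hrn : r ≤ n) (σ : Equiv.Perm (Fin r)) :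
    Function.End (Fin n) :=
  fun i => Fin.castLE hrn (σ (if hi : (i : ℕ) < r then ⟨i, hi⟩ else ⟨0, hr⟩))

/-- The idempotent `η = (1/r!) ∑_{g ∈ G} sgn(g|_{[r]}) g` of the monoid algebra,
where `G ≅ S_r` is the maximal subgroup at `eIdem n r`. -/
noncomputable def eta (n r : ℕ) (hr : 1 ≤ r) (hrn : r ≤ n) :
    MonoidAlgebra ℂ (Function.End (Fin n)) :=
  (r.factorial : ℂ)⁻¹ • ∑ σ : Equiv.Perm (Fin r),
    MonoidAlgebra.single (permEmbed n r hr hrn σ) ((Equiv.Perm.sign σ : ℤ) : ℂ)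

/-- A permutation of `Fin m`, viewed as an element of the transformation monoid. -/
def permToEnd (m : ℕ) : Equiv.Perm (Fin m) →* Function.End (Fin m) where
  toFun σ := ⇑σ
  map_one' := rfl
  map_mul' := fun _ _ => rfl

/-- The wedge product of a family of `r` vectors, as an element of the `r`-th
exterior power. -/
noncomputable def wedge {M : Type} [AddCommGroup M] [Module ℂ M] (r : ℕ) (v : Fin r → M) :
    ⋀[ℂ]^r M :=
  ⟨ExteriorAlgebra.ιMulti ℂ r v, ExteriorAlgebra.ιMulti_range ℂ r ⟨v, rfl⟩⟩

/-- The basis `w_1, …, w_n` of `ℂ^n`: `w_i = v_i - v_n` for `i < n` and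
`w_n = v_1 + ⋯ + v_n`. -/
noncomputable def wBasis (n : ℕ) : Fin n → (Fin n → ℂ) :=
  fun i => if h : (i : ℕ) < n - 1
    then Pi.single i 1 - Pi.single (⟨n - 1, by omega⟩ : Fin n) 1
    else ∑ j, Pi.single j 1

lemma wBasis_mem_aug (n : ℕ) (i : Fin n) (h : (i : ℕ) < n - 1) : wBasis n i ∈ Aug n := by
  show ∑ j, wBasis n i j = 0
  simp [wBasis, h, Finset.sum_sub_distrib, Finset.sum_pi_single]

/-- The vectors `w_i = v_i - v_n` (for `i < n`) as elements of the augmentation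
submodule; junk value `0` otherwise. -/
noncomputable def wAug (n : ℕ) : Fin n → ↥(Aug n) :=
  fun i => if h : (i : ℕ) < n - 1 then ⟨wBasis n i, wBasis_mem_aug n i h⟩ else 0

/-- The trivial representation of the full transformation monoid on `ℂ`. -/
noncomputable def trivRep (n : ℕ) : Representation ℂ (Function.End (Fin n)) ℂ := 1

/-- `projDimLE R M k` : the `R`-module `M` admits a projective resolution of length
at most `k`, i.e. has projective dimension at most `k`. -/
def projDimLE (R : Type) [Ring R] (M : Type) [AddCommMonoid M] [Module R M] (k : ℕ) : Prop :=
  ∃ (P : ℕ → ModuleCat.{0} R) (d : (i : ℕ) → (P (i + 1) →ₗ[R] P i)) (π : P 0 →ₗ[R] M),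
    (∀ i, Module.Projective R (P i)) ∧
    Function.Surjective π ∧
    LinearMap.ker π = LinearMap.range (d 0) ∧
    (∀ i, LinearMap.ker (d i) = LinearMap.range (d (i + 1))) ∧
    (∀ i, k < i → Subsingleton (P i))

/-- The sign character of `S_n`, extended by zero to all of `T_n`. -/
noncomputable def sgnExt (n : ℕ) (f : Function.End (Fin n)) : ℂ :=
  @dite ℂ (Function.Bijective f) (Fintype.decidableBijectiveFintype f)
    (fun h => ((Equiv.Perm.sign (Equiv.ofBijective f h) : ℤ) : ℂ)) (fun _ => 0)

/-!
Let `e ∈ T_n` fix the first `r` points and send all others to the first one, and let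
`ω = v_1 ∧ ⋯ ∧ v_r`. Then `e ω = ω`, while `e` maps `Aug(ℂ^n)` into the proper subspace
`Aug(ℂ^n) ∩ ⟨v_1, …, v_r⟩` of `⟨v_1, …, v_r⟩`, so `Λ^r e` kills `Λ^r(Aug(ℂ^n))`.
An equivariant projection `p` onto `Λ^r(Aug(ℂ^n))` therefore has
`p ω = p (e ω) = e (p ω) = 0`, so `p` kills the `T_n`-orbit of `ω`, which spans `Λ^r(ℂ^n)`.
Hence `p = 0`, which is impossible because `Λ^r(Aug(ℂ^n)) ≠ 0` for `r < n`.
-/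

namespace exteriorPower

lemma extMap_eq_map {R M N : Type} [CommRing R] [AddCommGroup M] [Module R M]
    [AddCommGroup N] [Module R N] (r : ℕ) (f : M →ₗ[R] N) :
    extMap r f = map r f := by
  refine linearMap_ext (AlternatingMap.ext fun v => Subtype.ext ?_)
  simp only [LinearMap.compAlternatingMap_apply, map_apply_ιMulti, ιMulti_apply_coe]
  exact ExteriorAlgebra.map_apply_ιMulti f v

lemma span_ιMulti_comp_eq_top {R M ι : Type*} [CommRing R] [AddCommGroup M] [Module R M]
    {v : ι → M} (hv : Submodule.span R (Set.range v) = ⊤) (r : ℕ) :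
    Submodule.span R (Set.range fun g : Fin r → ι => ιMulti R r (v ∘ g)) = ⊤ := by
  refine eq_top_iff.2 ((ιMulti_span_of_span R r M hv).ge.trans (Submodule.span_mono ?_))
  rintro _ ⟨a, ha, rfl⟩
  choose g hg using fun i => ha ⟨i, rfl⟩
  exact ⟨g, congrArg _ (funext hg)⟩

variable {K M N : Type*} [Field K] [AddCommGroup M] [Module K M] [AddCommGroup N] [Module K N]

lemma ιMulti_ne_zero_of_linearIndependent {r : ℕ} {v : Fin r → M}
    (hv : LinearIndependent K v) : ιMulti K r v ≠ 0 := by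
  simpa [ιMulti_family] using (ιMulti_family_linearIndependent_field (n := r) hv).ne_zero
    (Set.powersetCard.ofFinEmbEquiv (RelEmbedding.refl (· ≤ ·)))

lemma map_eq_zero_of_finrank_range_lt [FiniteDimensional K M] {r : ℕ} (f : M →ₗ[K] N)
    (hf : Module.finrank K (LinearMap.range f) < r) : map r f = 0 := by
  refine linearMap_ext (AlternatingMap.ext fun v => ?_)
  refine (map_apply_ιMulti f v).trans (AlternatingMap.map_linearDependent _ _ fun hv => ?_)
  have hv' : LinearIndependent K fun i => (⟨f (v i), LinearMap.mem_range_self f _⟩ :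
      LinearMap.range f) :=
    .of_comp (LinearMap.range f).subtype hv
  simpa using hv'.fintype_card_le_finrank.trans_lt hf

end exteriorPower

lemma natRep_apply (n : ℕ) (f : Function.End (Fin n)) (x : Fin n → ℂ) :
    natRep n f x = ∑ i, x i • Pi.single (f i) 1 := by
  funext j
  show (∑ i, if f i = j then x i else 0) = _
  simp [Finset.sum_apply, Pi.single_apply, eq_comm]

lemma natRep_single (n : ℕ) (f : Function.End (Fin n)) (i : Fin n) :
    natRep n f (Pi.single i 1) = Pi.single (f i) 1 := by
  simp [natRep_apply, Pi.single_apply]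

lemma extRep_ιMulti (n r : ℕ) (f : Function.End (Fin n)) (v : Fin r → Fin n → ℂ) :
    extRep n r f (exteriorPower.ιMulti ℂ r v) = exteriorPower.ιMulti ℂ r (natRep n f ∘ v) :=
  (LinearMap.congr_fun (exteriorPower.extMap_eq_map r (natRep n f)) _).trans
    (exteriorPower.map_apply_ιMulti _ _)

lemma extRep_ιMulti_single (n r : ℕ) (f : Function.End (Fin n)) (g : Fin r → Fin n) :
    extRep n r f (exteriorPower.ιMulti ℂ r fun i => Pi.single (g i) 1) =
      exteriorPower.ιMulti ℂ r fun i => Pi.single (f (g i)) 1 := by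
  rw [extRep_ιMulti]
  simp only [Function.comp_def, natRep_single]

lemma eIdem_lt (n : ℕ) {r : ℕ} (hr : 1 ≤ r) (i : Fin n) : (eIdem n r i : ℕ) < r := by
  unfold eIdem
  split_ifs with h
  exacts [h, hr]

lemma eIdem_castLE {n r : ℕ} (hrn : r ≤ n) (i : Fin r) :
    eIdem n r (Fin.castLE hrn i) = Fin.castLE hrn i :=
  dif_pos i.2

lemma finrank_range_natRep_eIdem_comp_subtype_lt {n r : ℕ} (hr : 1 ≤ r) (hrn : r ≤ n) :
    Module.finrank ℂ (LinearMap.range (natRep n (eIdem n r) ∘ₗ (Aug n).subtype)) < r := by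
  set S := Submodule.span ℂ
    (Set.range fun i : Fin r => (Pi.single (Fin.castLE hrn i) 1 : Fin n → ℂ))
  have hle : LinearMap.range (natRep n (eIdem n r) ∘ₗ (Aug n).subtype) ≤ Aug n ⊓ S := by
    rintro _ ⟨x, rfl⟩
    refine ⟨natRep_mem_aug n _ x.2, ?_⟩
    rw [LinearMap.comp_apply, natRep_apply]
    refine Submodule.sum_mem _ fun i _ => Submodule.smul_mem _ _ (Submodule.subset_span ?_)
    exact ⟨⟨_, eIdem_lt n hr i⟩, rfl⟩
  have hlt : Aug n ⊓ S < S := by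
    refine inf_lt_right.2 fun hS => ?_
    have h0 : (Pi.single (Fin.castLE hrn ⟨0, hr⟩) 1 : Fin n → ℂ) ∈ Aug n :=
      hS (Submodule.subset_span ⟨_, rfl⟩)
    simp [Aug] at h0
  calc Module.finrank ℂ (LinearMap.range (natRep n (eIdem n r) ∘ₗ (Aug n).subtype))
      ≤ Module.finrank ℂ ↥(Aug n ⊓ S) := Submodule.finrank_mono hle
    _ < Module.finrank ℂ S := Submodule.finrank_lt_finrank_of_lt hlt
    _ ≤ r := (finrank_range_le_card _).trans_eq (Fintype.card_fin r)

lemma extRep_eIdem_extMap_subtype {n r : ℕ} (hr : 1 ≤ r) (hrn : r ≤ n)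
    (y : ⋀[ℂ]^r (Aug n)) :
    extRep n r (eIdem n r) (extMap r (Aug n).subtype y) = 0 := by
  show extMap r _ (extMap r _ y) = 0
  rw [exteriorPower.extMap_eq_map, exteriorPower.extMap_eq_map, ← LinearMap.comp_apply,
    ← exteriorPower.map_comp,
    exteriorPower.map_eq_zero_of_finrank_range_lt _
      (finrank_range_natRep_eIdem_comp_subtype_lt hr hrn), LinearMap.zero_apply]

lemma range_extMap_subtype_ne_bot {n r : ℕ} (hrn : r < n) :
    LinearMap.range (extMap r (Aug n).subtype) ≠ ⊥ := by
  let last : Fin n := ⟨n - 1, by omega⟩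
  let u : Fin r → Fin n → ℂ := fun i => Pi.single (Fin.castLE hrn.le i) 1 - Pi.single last 1
  have hu : ∀ i, u i ∈ Aug n := fun i => by simp [u, Aug]
  have hind : LinearIndependent ℂ u := by
    refine .of_comp (LinearMap.funLeft ℂ ℂ (Fin.castLE hrn.le)) ?_
    convert (Pi.basisFun ℂ (Fin r)).linearIndependent
    funext i j
    have hj : (j : ℕ) ≠ n - 1 := by omega
    simp [u, last, Pi.single_apply, Fin.ext_iff, hj]
  refine (Submodule.ne_bot_iff _).2
    ⟨_, ⟨exteriorPower.ιMulti ℂ r fun i => ⟨u i, hu i⟩, rfl⟩, ?_⟩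
  rw [exteriorPower.extMap_eq_map, exteriorPower.map_apply_ιMulti]
  exact exteriorPower.ιMulti_ne_zero_of_linearIndependent hind

theorem exteriorPower_sequence_not_split_general (n r : ℕ) (hr : 1 ≤ r) (hrn : r < n) :
    ¬ ∃ p : ↥(⋀[ℂ]^r (Fin n → ℂ)) →ₗ[ℂ] ↥(⋀[ℂ]^r (Fin n → ℂ)),
        p.comp p = p ∧
        LinearMap.range p = LinearMap.range (extMap r (Aug n).subtype) ∧
        ∀ f : Function.End (Fin n), p.comp (extRep n r f) = (extRep n r f).comp p := by
  rintro ⟨p, -, hrange, hcomm⟩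
  have hp_comm (f : Function.End (Fin n)) (x) : p (extRep n r f x) = extRep n r f (p x) :=
    LinearMap.congr_fun (hcomm f) x
  let ω := exteriorPower.ιMulti ℂ r fun i => (Pi.single (Fin.castLE hrn.le i) 1 : Fin n → ℂ)
  have hpω : p ω = 0 := by
    obtain ⟨y, hy⟩ : p ω ∈ LinearMap.range (extMap r (Aug n).subtype) :=
      hrange ▸ LinearMap.mem_range_self p ω
    have hfix : extRep n r (eIdem n r) ω = ω := by
      simp only [ω, extRep_ιMulti_single, eIdem_castLE]
    rw [← hfix, hp_comm, ← hy, extRep_eIdem_extMap_subtype hr hrn.le]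
  have hp : p = 0 := by
    refine LinearMap.ext_on
      (exteriorPower.span_ιMulti_comp_eq_top (Pi.basisFun ℂ (Fin n)).span_eq r) ?_
    rintro _ ⟨g, rfl⟩
    let f : Function.End (Fin n) := fun k => if h : (k : ℕ) < r then g ⟨k, h⟩ else k
    have hf : extRep n r f ω = exteriorPower.ιMulti ℂ r (Pi.basisFun ℂ (Fin n) ∘ g) := by
      simp only [ω, extRep_ιMulti_single]
      congr 1
      funext i
      simp [f]
    beta_reduce
    rw [← hf, hp_comm, hpω, map_zero, LinearMap.zero_apply]
  exact range_extMap_subtype_ne_bot hrn (hrange ▸ hp ▸ LinearMap.range_zero)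

/-- For `n ≥ 2` and `1 ≤ r < n`, the short exact sequence
`0 → Λ^r(Aug(ℂ^n)) → Λ^r(ℂ^n) → Λ^{r−1}(Aug(ℂ^n)) → 0` of `ℂ[T_n]`-modules does not
split; equivalently, `Λ^r(Aug(ℂ^n))` is not a direct summand of `Λ^r(ℂ^n)` as a
`ℂ[T_n]`-module: there is no `T_n`-equivariant linear projection of `Λ^r(ℂ^n)` onto
the image of `Λ^r(Aug(ℂ^n))`. -/
theorem exteriorPower_sequence_not_split (n r : ℕ) (hn : 2 ≤ n) (hr : 1 ≤ r) (hrn : r < n) :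
    ¬ ∃ p : ↥(⋀[ℂ]^r (Fin n → ℂ)) →ₗ[ℂ] ↥(⋀[ℂ]^r (Fin n → ℂ)),
        p.comp p = p ∧
        LinearMap.range p = LinearMap.range (extMap r (Aug n).subtype) ∧
        ∀ f : Function.End (Fin n), p.comp (extRep n r f) = (extRep n r f).comp p :=
  exteriorPower_sequence_not_split_general n r hr hrn
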